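/- With η_k defined as above (for ξ ≥ √((2+ε_k)k + 1) with σ_k(ξ) = √(ξ²−2k) and C_k = √(2^k k!)), there exists a sequence ε_k > 0 with ε_k → 0 such that η_k is strictly decreasing in ξ on [√((2+ε_k)k+1), ∞). -/

import Mathlib

open Real Filter Set

/-- `σ_k(ξ) = √(ξ² − 2k)`. -/
noncomputable def sigmaH (k : ℕ) (ξ : ℝ) : ℝ := Real.sqrt (ξ ^ 2 - 2 * k)

/-- The normalizing constant `C_k = √(2^k k!)` of physicists' Hermite
polynomials. -/
noncomputable def CH (k : ℕ) : ℝ := Real.sqrt (2 ^ k * k.factorial)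

/-- The exponent `η_k(ξ)` of the asymptotic envelope of the orthonormal
physicists' Hermite polynomial in its monotonic region. -/
noncomputable def etaH (k : ℕ) (ξ : ℝ) : ℝ :=
  1 / 2 - sigmaH k ξ / (2 * ξ) - Real.log (CH k) / ξ ^ 2 - k / (2 * ξ ^ 2)
    + k * Real.log (sigmaH k ξ + ξ) / ξ ^ 2
    + Real.log ((1 / 2) * (1 + ξ / sigmaH k ξ)) / (2 * ξ ^ 2)

/-!
Differentiating with `σ_k' = ξ / σ_k` gives `η_k' = -X_ξ / ξ³ - (ξ - σ_k) / (2 σ_k² ξ²)`, and the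
second term is negative as soon as `k ≥ 1`. Once `ξ² ≥ 2k + 1` we have `σ_k ≥ 1`, so `σ_k + ξ ≥ 1 + √(2k)`
and `ξ / σ_k ≥ 1`; hence `X_ξ ≥ 2k log (1 + √(2k)) - k - log (2^k k!)`, which is nonnegative by the
Stirling-type bound `k! ≤ e √k (k/e)^k` together with `log (1 + 1/u) ≥ 2 / (2u + 1)`. Thus `η_k` is
strictly decreasing on `[√(2k + 1), ∞)`, and any positive `ε_k → 0` will do.
-/

lemma log_factorial_le {k : ℕ} (hk : k ≠ 0) :
    log k.factorial ≤ k * log k - k + log k / 2 + 1 := by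
  have hmono : log (Stirling.stirlingSeq k) ≤ log (Stirling.stirlingSeq 1) := by
    obtain ⟨n, rfl⟩ := Nat.exists_eq_succ_of_ne_zero hk
    exact Stirling.log_stirlingSeq'_antitone (Nat.zero_le n)
  have hk0 : (0 : ℝ) < k := by positivity
  rw [Stirling.log_stirlingSeq_formula, Stirling.stirlingSeq_one,
    log_div (exp_ne_zero 1) (by positivity), log_exp, log_sqrt zero_le_two,
    log_mul two_ne_zero hk0.ne', log_div hk0.ne' (exp_ne_zero 1), log_exp] at hmono
  linarith

lemma two_div_two_mul_add_one_le_log_one_add_inv {a : ℝ} (ha : 0 < a) :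
    2 / (2 * a + 1) ≤ log (1 + a⁻¹) := by
  have h := le_hasSum (hasSum_log_one_add_inv ha) 0 fun j _ => by positivity
  simpa [div_eq_mul_inv] using h

lemma two_mul_log_CH (k : ℕ) : 2 * log (CH k) = k * log 2 + log k.factorial := by
  rw [CH, log_sqrt (by positivity), log_mul (by positivity) (by positivity), log_pow]
  ring

lemma two_mul_log_CH_add_le {k : ℕ} (hk : 0 < k) :
    2 * log (CH k) + k ≤ 2 * k * log (1 + √(2 * k)) := by
  have hk0 : (0 : ℝ) < k := by positivity
  set s := √(k : ℝ)
  set u := √(2 * k : ℝ) with hu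
  have hs1 : 1 ≤ s := one_le_sqrt.2 (by exact_mod_cast hk)
  have hs2 : s ^ 2 = k := sq_sqrt hk0.le
  have hu0 : 0 < u := by positivity
  have hus : u = √2 * s := sqrt_mul zero_le_two _
  have hsqrt2 : √2 < 1.5 := by rw [sqrt_lt' (by norm_num)]; norm_num
  have hlog_u : log u = (log 2 + log k) / 2 := by
    rw [hu, log_sqrt (by positivity), log_mul two_ne_zero hk0.ne']
  have hlog_k : log k ≤ 2 * (s - 1) := by
    rw [← hs2, log_pow]
    push_cast
    linarith [log_le_sub_one_of_pos (by positivity : 0 < s)]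
  -- the Stirling remainder `log k / 2 + 1` is absorbed by `2k log (1 + 1/u) ≥ 4k / (2u + 1) ≥ √k`
  have hremainder : log k / 2 + 1 ≤ 2 * k * (2 / (2 * u + 1)) := by
    have hs_le : s ≤ 2 * k * (2 / (2 * u + 1)) := by
      rw [← hs2, mul_div_assoc', le_div_iff₀ (by positivity), hus]
      nlinarith [sqrt_nonneg 2]
    linarith
  have hsplit : log (1 + u) = log u + log (1 + u⁻¹) := by
    rw [← log_mul (by positivity) (by positivity), mul_add, mul_inv_cancel₀ (by positivity),
      mul_one, add_comm]
  calc 2 * log (CH k) + k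
      ≤ k * log 2 + (k * log k - k + log k / 2 + 1) + k := by
        rw [two_mul_log_CH]; linarith [log_factorial_le hk.ne']
    _ = 2 * k * log u + (log k / 2 + 1) := by rw [hlog_u]; ring
    _ ≤ 2 * k * log u + 2 * k * log (1 + u⁻¹) := by
        gcongr
        exact hremainder.trans (by gcongr; exact two_div_two_mul_add_one_le_log_one_add_inv hu0)
    _ = 2 * k * log (1 + u) := by rw [hsplit]; ring

/-- `X_ξ` in the notation of the paper. -/
noncomputable def etaX (k : ℕ) (ξ : ℝ) : ℝ :=
  2 * k * log (sigmaH k ξ + ξ) + log ((1 / 2) * (1 + ξ / sigmaH k ξ)) - k - 2 * log (CH k)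

section
variable {k : ℕ} {ξ : ℝ}

lemma sq_sigmaH (h : 2 * k < ξ ^ 2) : sigmaH k ξ ^ 2 = ξ ^ 2 - 2 * k :=
  sq_sqrt (by linarith)

lemma sigmaH_pos (h : 2 * k < ξ ^ 2) : 0 < sigmaH k ξ :=
  sqrt_pos.2 (by linarith)

lemma hasDerivAt_sigmaH (h : 2 * k < ξ ^ 2) : HasDerivAt (sigmaH k) (ξ / sigmaH k ξ) ξ := by
  refine (((hasDerivAt_pow 2 ξ).sub_const (2 * (k : ℝ))).sqrt (by linarith)).congr_deriv ?_
  change _ / (2 * sigmaH k ξ) = _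
  field_simp [(sigmaH_pos h).ne']
  ring

lemma hasDerivAt_etaH (hξ : 0 < ξ) (h : 2 * k < ξ ^ 2) :
    HasDerivAt (etaH k)
      (-etaX k ξ / ξ ^ 3 - (ξ - sigmaH k ξ) / (2 * sigmaH k ξ ^ 2 * ξ ^ 2)) ξ := by
  have hσ0 := sigmaH_pos h
  have hσ := hasDerivAt_sigmaH h
  have hξσ : 0 < sigmaH k ξ + ξ := by positivity
  have hratio : 0 < (1 / 2) * (1 + ξ / sigmaH k ξ) := by positivity
  have hsq := hasDerivAt_pow 2 ξ
  have hlog₁ := ((hσ.add (hasDerivAt_id ξ)).log hξσ.ne').const_mul (k : ℝ)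
  have hlog₂ := ((((hasDerivAt_id ξ).div hσ hσ0.ne').const_add 1).const_mul (1 / 2 : ℝ)).log
    hratio.ne'
  have H := ((((hasDerivAt_const ξ (1 / 2 : ℝ)).sub
    (hσ.div ((hasDerivAt_id ξ).const_mul 2) (by positivity))).sub
    ((hasDerivAt_const ξ (log (CH k))).div hsq (by positivity))).sub
    ((hasDerivAt_const ξ (k : ℝ)).div (hsq.const_mul 2) (by positivity))).add
    (hlog₁.div hsq (by positivity)) |>.add (hlog₂.div (hsq.const_mul 2) (by positivity))
  refine H.congr_deriv ?_
  simp only [Pi.add_apply, Pi.div_apply, id_eq, etaX]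
  have hσ2 := sq_sigmaH h
  -- keep the logarithms opaque, so that `field_simp` leaves their arguments alone
  generalize log (1 / 2 * (1 + ξ / sigmaH k ξ)) = L
  generalize log (sigmaH k ξ + ξ) = M
  generalize sigmaH k ξ = σ at *
  field_simp
  rw [show (k : ℝ) = (ξ ^ 2 - σ ^ 2) / 2 by linarith]
  ring

lemma one_le_sigmaH (h : 2 * k + 1 ≤ ξ ^ 2) : 1 ≤ sigmaH k ξ :=
  one_le_sqrt.2 (by linarith)

lemma sigmaH_lt_self (hk : 0 < k) (hξ : 0 < ξ) : sigmaH k ξ < ξ := by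
  rw [sigmaH, sqrt_lt' hξ]
  have : (0 : ℝ) < k := by exact_mod_cast hk
  linarith

lemma etaX_nonneg (hk : 0 < k) (hξ : 0 < ξ) (h : 2 * k + 1 ≤ ξ ^ 2) : 0 ≤ etaX k ξ := by
  have hσ1 := one_le_sigmaH h
  have hσξ := sigmaH_lt_self hk hξ
  have hsqrt : √(2 * k) ≤ ξ := sqrt_le_iff.2 ⟨hξ.le, by linarith⟩
  have hlog_sum : log (1 + √(2 * k)) ≤ log (sigmaH k ξ + ξ) :=
    log_le_log (by positivity) (by linarith)
  have hlog_ratio : 0 ≤ log ((1 / 2) * (1 + ξ / sigmaH k ξ)) := by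
    have : 1 ≤ ξ / sigmaH k ξ := (one_le_div (by linarith)).2 hσξ.le
    exact log_nonneg (by linarith)
  have hkey := (two_mul_log_CH_add_le hk).trans
    (mul_le_mul_of_nonneg_left hlog_sum (by positivity))
  rw [etaX]
  linarith

lemma etaH_strictAntiOn (hk : 0 < k) : StrictAntiOn (etaH k) (Ici √(2 * k + 1)) := by
  have hmem : ∀ ξ, √(2 * k + 1) ≤ ξ → 0 < ξ ∧ 2 * (k : ℝ) + 1 ≤ ξ ^ 2 := fun ξ hξ =>
    ⟨(sqrt_pos.2 (by positivity)).trans_le hξ, (sqrt_le_iff.1 hξ).2⟩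
  have hderiv : ∀ ξ, √(2 * k + 1) ≤ ξ → HasDerivAt (etaH k)
      (-etaX k ξ / ξ ^ 3 - (ξ - sigmaH k ξ) / (2 * sigmaH k ξ ^ 2 * ξ ^ 2)) ξ := fun ξ hξ =>
    hasDerivAt_etaH (hmem ξ hξ).1 (by linarith [(hmem ξ hξ).2])
  refine strictAntiOn_of_deriv_neg (convex_Ici _)
    (fun ξ hξ => (hderiv ξ hξ).continuousAt.continuousWithinAt) fun ξ hξ => ?_
  rw [interior_Ici] at hξ
  replace hξ := (mem_Ioi.1 hξ).le
  obtain ⟨hξ0, h⟩ := hmem ξ hξ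
  have hσ0 : 0 < sigmaH k ξ := sigmaH_pos (by linarith)
  rw [(hderiv ξ hξ).deriv]
  have hX : 0 ≤ etaX k ξ / ξ ^ 3 := div_nonneg (etaX_nonneg hk hξ0 h) (by positivity)
  have hgap : 0 < (ξ - sigmaH k ξ) / (2 * sigmaH k ξ ^ 2 * ξ ^ 2) :=
    div_pos (by linarith [sigmaH_lt_self hk hξ0]) (by positivity)
  rw [neg_div]
  linarith

end

/-- There is a sequence `ε_k > 0`, `ε_k → 0`, such that `η_k` is strictly
decreasing on `[√((2+ε_k)k+1), ∞)`. -/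
theorem etaH_strictAnti :
    ∃ ε : ℕ → ℝ, (∀ k, 0 < ε k) ∧ Tendsto ε atTop (nhds 0) ∧
      ∀ k : ℕ, 1 ≤ k →
        StrictAntiOn (etaH k) (Ici (Real.sqrt ((2 + ε k) * k + 1))) := by
  refine ⟨fun k => 1 / ((k : ℝ) + 1), fun k => by positivity,
    tendsto_one_div_add_atTop_nhds_zero_nat, fun k hk => ?_⟩
  refine (etaH_strictAntiOn hk).mono (Ici_subset_Ici.2 (sqrt_le_sqrt ?_))
  have : 0 ≤ 1 / ((k : ℝ) + 1) * k := by positivity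
  linarith
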